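/- Let n ≥ 5, ε ≤ 1/(n-1), and let w be a threshold word over n letters. If a factor xyx of w is not (|x|,ε)-exponential, then per(xyx) = |xy|, i.e., the borders x realize the minimal period, so the excess |xyx| - per(xyx) equals |x|. -/

import Mathlib

open List

/-- `p` is a period of the word `w`. -/
def HasPeriod {α : Type*} (w : List α) (p : ℕ) : Prop :=
  1 ≤ p ∧ ∀ i, i + p < w.length → w[i]? = w[i + p]?

/-- minimal period of a word -/
noncomputable def per {α : Type*} (w : List α) : ℕ := sInf {p | _root_.HasPeriod w p}

/-- local exponent of `w` is at most `q`: every nonempty factor has exponent ≤ q. -/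
noncomputable def lexpLE {α : Type*} (w : List α) (q : ℚ) : Prop :=
  ∀ v : List α, v <:+: w → v ≠ [] → (v.length : ℚ) / per v ≤ q

/-- `v` is a (finite) factor of the infinite word `ω`. -/
def FactorOfInf {α : Type*} (v : List α) (ω : ℕ → α) : Prop :=
  ∃ i : ℕ, v = List.ofFn (fun j : Fin v.length => ω (i + j))

/-!
The borders of `xyx` give it the period `|xy|`. A shorter period `p ≤ |xy| - 1` would bound
`|xyx| ≤ q p ≤ q (|xy| - 1)` for the threshold `q = n/(n-1)`, and since `ε ≤ 1/(n-1) ≤ q` this gives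
`|xyx| + ε ≤ q |xy|`, i.e. `xyx` would be `(|x|,ε)`-exponential.
-/

section Periods

variable {α : Type*}

theorem hasPeriod_per {w : List α} {p : ℕ} (hp : _root_.HasPeriod w p) :
    _root_.HasPeriod w (per w) :=
  Nat.sInf_mem (s := {p | _root_.HasPeriod w p}) ⟨p, hp⟩

theorem per_le_of_hasPeriod {w : List α} {p : ℕ} (hp : _root_.HasPeriod w p) : per w ≤ p :=
  Nat.sInf_le hp

theorem hasPeriod_append_append_self {x y : List α} (hxy : x ++ y ≠ []) :
    _root_.HasPeriod (x ++ y ++ x) (x ++ y).length := by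
  refine ⟨List.length_pos_iff.mpr hxy, fun i hi => ?_⟩
  have hix : i < x.length := by simp only [length_append] at hi; omega
  rw [List.getElem?_append_right (l₁ := x ++ y) (i := i + _) (by omega), Nat.add_sub_cancel,
    List.append_assoc, List.getElem?_append_left hix]

theorem per_eq_of_lt_div_add {v : List α} {m : ℕ} {q ε : ℚ} (hm : _root_.HasPeriod v m)
    (hεq : ε ≤ q) (hexp : (v.length : ℚ) / per v ≤ q)
    (hlt : q < ((v.length : ℚ) + ε) / m) : per v = m := by
  by_contra hne
  have hpm : per v + 1 ≤ m := by have := per_le_of_hasPeriod hm; omega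
  have hp_pos : (0 : ℚ) < per v := by exact_mod_cast (hasPeriod_per hm).1
  have hm_pos : (0 : ℚ) < m := by exact_mod_cast hm.1
  have hq : 0 ≤ q := le_trans (by positivity) hexp
  have hpm' : (per v : ℚ) + 1 ≤ m := by exact_mod_cast hpm
  rw [div_le_iff₀ hp_pos] at hexp
  rw [lt_div_iff₀ hm_pos] at hlt
  have : q * m < q * m := calc
    q * m < v.length + ε := hlt
    _ ≤ q * per v + q := add_le_add hexp hεq
    _ ≤ q * m := by nlinarith
  exact lt_irrefl _ this

end Periods

theorem stmt10 (n : ℕ) (hn : 5 ≤ n) (ε : ℚ) (hε : ε ≤ 1 / ((n : ℚ) - 1))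
    (w : List (Fin n)) (hthr : lexpLE w ((n : ℚ) / (n - 1)))
    (x y : List (Fin n)) (hx : x ≠ []) (hfac : x ++ y ++ x <:+: w)
    (hbad : (n : ℚ) / (n - 1) < (((x ++ y ++ x).length : ℚ) + ε) / ((x ++ y).length : ℚ)) :
    per (x ++ y ++ x) = (x ++ y).length ∧
    (x ++ y ++ x).length - per (x ++ y ++ x) = x.length := by
  have hεq : ε ≤ (n : ℚ) / (n - 1) := by
    have hn1 : (1 : ℚ) < n := by exact_mod_cast (by omega : 1 < n)
    exact hε.trans (div_le_div_of_nonneg_right (by linarith) (by linarith))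
  have hper : per (x ++ y ++ x) = (x ++ y).length :=
    per_eq_of_lt_div_add (hasPeriod_append_append_self (by simp [hx])) hεq
      (hthr _ hfac (by simp [hx])) hbad
  refine ⟨hper, ?_⟩
  simp only [hper, length_append]
  omega
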